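/- arXiv:2005.10002 — 8 statements merged into one kernel-verified Lean document; each statement's English description precedes it below -/
import Mathlib

section
/- Fix α > 0. Let c(n, p) = C(n, p)/2^p with C(n,p) = 2·∑_{j=0}^{n-1} binom(p-1, j). Then as n → ∞ with p = ⌊α n⌋, c(n, p) converges to 1 if α < 2, to 0 if α > 2, and to 1/2 if α = 2 (along even αn). -/
open Filter

/-- Cover's count of linearly realizable dichotomies of `p` points in general
position in `ℝ^n`: `C(n,p) = 2 * ∑_{j=0}^{n-1} binom(p-1, j)`. -/
def coverC (n p : ℕ) : ℕ := 2 * ∑ j ∈ Finset.range n, Nat.choose (p - 1) j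

/-- The fraction of linearly realizable dichotomies. -/
noncomputable def coverFrac (n p : ℕ) : ℝ := (coverC n p : ℝ) / 2 ^ p

/-!
Writing `p = m + 1`, `coverFrac n p` is the probability that a Binomial(m, 1/2) variable is
less than `n`. Chernoff's bound gives, for `t ≥ 1`, `P(X ≥ n) ≤ ((1 + t) / 2) ^ m / t ^ n`, and
for `t ≤ 1`, `P(X < n) ≤ ((1 + t) / 2) ^ m / t ^ n`. Since `m ≈ α n`, these bounds decay like
`(((1 + t) / 2) ^ α / t) ^ n` as soon as `((1 + t) / 2) ^ α < t`. For `α ≠ 2` such a `t` exists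
near `1`, because `((1 + t) / 2) ^ α - t` vanishes at `1` with derivative `α / 2 - 1 ≠ 0`, and
`t ≤ ((1 + t) / 2) ^ 2` (AM–GM) puts it on the side of `1` that each tail needs. At `α = 2` the
symmetry of the binomial coefficients makes `coverFrac n (2 * n) = 1 / 2` exactly.
-/

open Finset Topology

lemma sum_choose_mul_pow_le (s : Finset ℕ) (m : ℕ) {t : ℝ} (ht : 0 ≤ t) :
    ∑ j ∈ s, (m.choose j : ℝ) * t ^ j ≤ (1 + t) ^ m := by
  have hzero : ∀ j ∈ s ∪ range (m + 1), j ∉ range (m + 1) → (m.choose j : ℝ) * t ^ j = 0 :=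
    fun j _ hj => by rw [Nat.choose_eq_zero_of_lt (by simpa using hj), Nat.cast_zero, zero_mul]
  calc ∑ j ∈ s, (m.choose j : ℝ) * t ^ j
      ≤ ∑ j ∈ s ∪ range (m + 1), (m.choose j : ℝ) * t ^ j :=
        sum_le_sum_of_subset_of_nonneg subset_union_left fun _ _ _ => by positivity
    _ = ∑ j ∈ range (m + 1), (m.choose j : ℝ) * t ^ j := (sum_subset subset_union_right hzero).symm
    _ = (1 + t) ^ m := by
      rw [add_comm 1 t, add_pow]; exact sum_congr rfl fun j _ => by rw [one_pow, mul_one, mul_comm]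

lemma sum_Ico_choose_mul_pow_le (m n : ℕ) {t : ℝ} (ht : 1 ≤ t) :
    (∑ j ∈ Ico n (m + 1), (m.choose j : ℝ)) * t ^ n ≤ (1 + t) ^ m := by
  rw [sum_mul]
  refine le_trans (sum_le_sum fun j hj => ?_) (sum_choose_mul_pow_le _ m (by linarith))
  exact mul_le_mul_of_nonneg_left (pow_le_pow_right₀ ht (mem_Ico.1 hj).1) (Nat.cast_nonneg _)

lemma sum_range_choose_mul_pow_le (m n : ℕ) {t : ℝ} (ht₀ : 0 ≤ t) (ht₁ : t ≤ 1) :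
    (∑ j ∈ range n, (m.choose j : ℝ)) * t ^ n ≤ (1 + t) ^ m := by
  rw [sum_mul]
  refine le_trans (sum_le_sum fun j hj => ?_) (sum_choose_mul_pow_le _ m ht₀)
  exact mul_le_mul_of_nonneg_left (pow_le_pow_of_le_one ht₀ ht₁ (mem_range.1 hj).le)
    (Nat.cast_nonneg _)

lemma sum_range_choose_add_sum_Ico_choose (m n : ℕ) :
    ∑ j ∈ range n, m.choose j + ∑ j ∈ Ico n (m + 1), m.choose j = 2 ^ m := by
  rcases le_total n (m + 1) with h | h
  · rw [sum_range_add_sum_Ico _ h, Nat.sum_range_choose]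
  · rw [Ico_eq_empty_of_le h, sum_empty, add_zero, ← sum_range_add_sum_Ico _ h,
      Nat.sum_range_choose, add_eq_left]
    exact sum_eq_zero fun j hj => Nat.choose_eq_zero_of_lt (mem_Ico.1 hj).1

lemma coverFrac_nonneg (n p : ℕ) : 0 ≤ coverFrac n p := by
  unfold coverFrac
  positivity

lemma coverFrac_succ (n m : ℕ) :
    coverFrac n (m + 1) = (∑ j ∈ range n, (m.choose j : ℝ)) / 2 ^ m := by
  rw [coverFrac, coverC, Nat.add_sub_cancel, pow_succ']
  push_cast
  field_simp

lemma one_sub_coverFrac_succ (n m : ℕ) :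
    1 - coverFrac n (m + 1) = (∑ j ∈ Ico n (m + 1), (m.choose j : ℝ)) / 2 ^ m := by
  have h : (∑ j ∈ range n, (m.choose j : ℝ)) + ∑ j ∈ Ico n (m + 1), (m.choose j : ℝ) = 2 ^ m := by
    exact_mod_cast sum_range_choose_add_sum_Ico_choose m n
  rw [coverFrac_succ, eq_div_iff (by positivity), sub_mul, div_mul_cancel₀ _ (by positivity)]
  linarith

lemma one_sub_coverFrac_succ_le (n m : ℕ) {t : ℝ} (ht : 1 ≤ t) :
    1 - coverFrac n (m + 1) ≤ ((1 + t) / 2) ^ m / t ^ n := by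
  rw [one_sub_coverFrac_succ, div_pow, div_div, div_le_div_iff₀ (by positivity) (by positivity)]
  calc (∑ j ∈ Ico n (m + 1), (m.choose j : ℝ)) * (2 ^ m * t ^ n)
      = (∑ j ∈ Ico n (m + 1), (m.choose j : ℝ)) * t ^ n * 2 ^ m := by ring
    _ ≤ (1 + t) ^ m * 2 ^ m := by gcongr; exact sum_Ico_choose_mul_pow_le m n ht

lemma coverFrac_succ_le (n m : ℕ) {t : ℝ} (ht₀ : 0 < t) (ht₁ : t ≤ 1) :
    coverFrac n (m + 1) ≤ ((1 + t) / 2) ^ m / t ^ n := by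
  rw [coverFrac_succ, div_pow, div_div, div_le_div_iff₀ (by positivity) (by positivity)]
  calc (∑ j ∈ range n, (m.choose j : ℝ)) * (2 ^ m * t ^ n)
      = (∑ j ∈ range n, (m.choose j : ℝ)) * t ^ n * 2 ^ m := by ring
    _ ≤ (1 + t) ^ m * 2 ^ m := by gcongr; exact sum_range_choose_mul_pow_le m n ht₀.le ht₁

lemma coverFrac_two_mul {n : ℕ} (hn : n ≠ 0) : coverFrac n (2 * n) = 1 / 2 := by
  obtain ⟨k, rfl⟩ := Nat.exists_eq_succ_of_ne_zero hn
  have h : ∑ j ∈ range (k + 1), ((2 * k + 1).choose j : ℝ) = 4 ^ k := by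
    exact_mod_cast Nat.sum_range_choose_halfway k
  rw [show 2 * (k + 1) = 2 * k + 1 + 1 by ring, coverFrac_succ, h, pow_succ, pow_mul]
  field_simp
  norm_num

lemma hasDerivAt_half_one_add_rpow_sub (α : ℝ) :
    HasDerivAt (fun t : ℝ => ((1 + t) / 2) ^ α - t) (α / 2 - 1) 1 := by
  have h₁ : HasDerivAt (fun t : ℝ => (1 + t) / 2) (1 / 2) 1 :=
    ((hasDerivAt_id' 1).const_add 1).div_const 2
  have h : HasDerivAt (fun t : ℝ => ((1 + t) / 2) ^ α - t)
      (1 / 2 * α * ((1 + 1) / 2) ^ (α - 1) - 1) 1 :=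
    (h₁.rpow_const (Or.inl (by norm_num))).sub (hasDerivAt_id' 1)
  convert h using 1
  norm_num
  ring

lemma exists_half_one_add_rpow_lt {α : ℝ} (hα : α ≠ 2) :
    ∃ t : ℝ, 0 < t ∧ ((1 + t) / 2) ^ α < t := by
  have hmin : ¬IsLocalMin (fun t : ℝ => ((1 + t) / 2) ^ α - t) 1 := fun h =>
    hα (by linarith [h.hasDerivAt_eq_zero (hasDerivAt_half_one_add_rpow_sub α)])
  obtain ⟨t, hlt, ht⟩ := ((not_eventually.1 hmin).and_eventually (lt_mem_nhds one_pos)).exists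
  refine ⟨t, ht, ?_⟩
  norm_num at hlt
  linarith

lemma self_le_half_one_add_sq (t : ℝ) : t ≤ ((1 + t) / 2) ^ (2 : ℝ) := by
  rw [Real.rpow_two]
  nlinarith [sq_nonneg (1 - t)]

lemma exists_one_lt_half_one_add_rpow_lt {α : ℝ} (hα : α < 2) :
    ∃ t : ℝ, 1 < t ∧ ((1 + t) / 2) ^ α < t := by
  obtain ⟨t, ht₀, ht⟩ := exists_half_one_add_rpow_lt hα.ne
  refine ⟨t, lt_of_not_ge fun ht₁ => ht.not_ge ?_, ht⟩
  exact (self_le_half_one_add_sq t).trans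
    (Real.rpow_le_rpow_of_exponent_ge (by positivity) (by linarith) hα.le)

lemma exists_lt_one_half_one_add_rpow_lt {α : ℝ} (hα : 2 < α) :
    ∃ t : ℝ, 0 < t ∧ t < 1 ∧ ((1 + t) / 2) ^ α < t := by
  obtain ⟨t, ht₀, ht⟩ := exists_half_one_add_rpow_lt hα.ne'
  refine ⟨t, ht₀, lt_of_not_ge fun ht₁ => ht.not_ge ?_, ht⟩
  exact (self_le_half_one_add_sq t).trans
    (Real.rpow_le_rpow_of_exponent_le (by linarith) hα.le)

lemma eventually_floor_mul_eq_succ {α : ℝ} (hα : 0 < α) :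
    ∀ᶠ n : ℕ in atTop, ∃ m : ℕ, ⌊α * n⌋₊ = m + 1 ∧ (m : ℝ) ≤ α * n ∧ α * n < m + 2 := by
  have h : Tendsto (fun n : ℕ => α * n) atTop atTop :=
    tendsto_natCast_atTop_atTop.const_mul_atTop hα
  filter_upwards [h.eventually_ge_atTop 1] with n hn
  have hp : 1 ≤ ⌊α * n⌋₊ := Nat.le_floor (by exact_mod_cast hn)
  refine ⟨⌊α * n⌋₊ - 1, by omega, ?_, ?_⟩
  · exact (Nat.cast_le.2 (Nat.sub_le _ 1)).trans (Nat.floor_le (by linarith))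
  · have := Nat.lt_floor_add_one (α * n)
    rw [Nat.cast_sub hp]
    push_cast
    linarith

lemma tendsto_coverFrac_floor_mul_of_lt_two {α : ℝ} (hα₀ : 0 < α) (hα : α < 2) :
    Tendsto (fun n : ℕ => coverFrac n ⌊α * n⌋₊) atTop (𝓝 1) := by
  obtain ⟨t, ht, hrt⟩ := exists_one_lt_half_one_add_rpow_lt hα
  set r := (1 + t) / 2 with hr_def
  have hr : 1 ≤ r := by linarith [hr_def]
  have hq : r ^ α / t < 1 := (div_lt_one (by linarith)).2 hrt
  have hgap : Tendsto (fun n : ℕ => 1 - coverFrac n ⌊α * n⌋₊) atTop (𝓝 0) := by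
    refine squeeze_zero' ?_ ?_ (tendsto_pow_atTop_nhds_zero_of_lt_one (by positivity) hq)
    all_goals filter_upwards [eventually_floor_mul_eq_succ hα₀] with n ⟨m, hp, hm, _⟩
    · rw [hp, one_sub_coverFrac_succ]
      positivity
    · have hrm : r ^ m ≤ (r ^ α) ^ n := by
        rw [← Real.rpow_natCast, ← Real.rpow_mul_natCast (by positivity)]
        exact Real.rpow_le_rpow_of_exponent_le hr hm
      calc 1 - coverFrac n ⌊α * n⌋₊ ≤ r ^ m / t ^ n := hp ▸ one_sub_coverFrac_succ_le n m ht.le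
        _ ≤ (r ^ α) ^ n / t ^ n := by gcongr
        _ = (r ^ α / t) ^ n := (div_pow _ _ _).symm
  simpa using hgap.const_sub 1

lemma tendsto_coverFrac_floor_mul_of_two_lt {α : ℝ} (hα : 2 < α) :
    Tendsto (fun n : ℕ => coverFrac n ⌊α * n⌋₊) atTop (𝓝 0) := by
  obtain ⟨t, ht₀, ht₁, hrt⟩ := exists_lt_one_half_one_add_rpow_lt hα
  set r := (1 + t) / 2 with hr_def
  have hr₀ : 0 < r := by positivity
  have hr₁ : r ≤ 1 := by linarith [hr_def]
  have hq : r ^ α / t < 1 := (div_lt_one ht₀).2 hrt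
  have hbound : Tendsto (fun n : ℕ => (r ^ α / t) ^ n / r ^ 2) atTop (𝓝 0) := by
    simpa using (tendsto_pow_atTop_nhds_zero_of_lt_one (by positivity) hq).div_const (r ^ 2)
  refine squeeze_zero' (Eventually.of_forall fun n => coverFrac_nonneg _ _) ?_ hbound
  filter_upwards [eventually_floor_mul_eq_succ (by linarith : 0 < α)] with n ⟨m, hp, _, hm⟩
  have hrm : r ^ (m + 2) ≤ (r ^ α) ^ n := by
    rw [← Real.rpow_natCast, ← Real.rpow_mul_natCast hr₀.le]
    exact Real.rpow_le_rpow_of_exponent_ge hr₀ hr₁ (by exact_mod_cast hm.le)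
  calc coverFrac n ⌊α * n⌋₊ ≤ r ^ m / t ^ n := hp ▸ coverFrac_succ_le n m ht₀ ht₁.le
    _ = r ^ (m + 2) / t ^ n / r ^ 2 := by field_simp; ring
    _ ≤ (r ^ α) ^ n / t ^ n / r ^ 2 := by gcongr
    _ = (r ^ α / t) ^ n / r ^ 2 := by rw [div_pow (r ^ α)]

theorem coverFrac_thermodynamic_limit (α : ℝ) (hα : 0 < α) :
    (α < 2 → Tendsto (fun n : ℕ => coverFrac n ⌊α * n⌋₊) atTop (nhds 1)) ∧
    (2 < α → Tendsto (fun n : ℕ => coverFrac n ⌊α * n⌋₊) atTop (nhds 0)) ∧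
    Tendsto (fun n : ℕ => coverFrac n (2 * n)) atTop (nhds (1 / 2)) :=
  ⟨tendsto_coverFrac_floor_mul_of_lt_two hα, tendsto_coverFrac_floor_mul_of_two_lt,
    tendsto_const_nhds.congr' <|
      (eventually_ne_atTop 0).mono fun _ hn => (coverFrac_two_mul hn).symm⟩
end

section
/- Let ψ ∈ (0,1) and let C(n,p) satisfy C(n,p+1) = ψ·C(n,p) + C(n−1,p) + (1−ψ)·C(n−2,p), with C(n,p) = 0 for n ≤ 0 and C(n,1) = 2 for n ≥ 1. Then for each fixed n ≥ 1, C(n,p)/[2·binom(p+n−1, n−1)·ψ^{p−n}] → 1 as p → ∞. In particular C(n,p) → 0 as p → ∞. -/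
open Filter Asymptotics Topology Finset

/-!
Dividing out the geometric factor, `D n q = C(n, q+1) / ψ^(q+1)` satisfies
`D n (q+1) - D n q = ψ⁻¹ D (n-1) q + ((1-ψ)/ψ) D (n-2) q`, with `D 1 = 2/ψ` and `D n = 0`
for `n ≤ 0`. Dropping the `(1-ψ)/ψ` term, the solution is, by Pascal's rule,
`2 ψ^(-n) binom(q, n-1)`, a polynomial of degree `n-1`; the dropped term only involves `D (n-2)`,
of degree `n-3`, so summing differences shows by induction on `n` that the error is
`o(q^(n-1))`. Since `binom(q, n-1) ~ binom(q+n, n-1)`, this is the claimed equivalence, and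
`C(n, p) → 0` because `ψ^p` beats every polynomial.
-/

theorem isLittleO_pow_succ_of_sub_isLittleO {f : ℕ → ℝ} {k : ℕ}
    (h : (fun p => f (p + 1) - f p) =o[atTop] fun p => (p : ℝ) ^ k) :
    f =o[atTop] fun p => (p : ℝ) ^ (k + 1) := by
  set g : ℕ → ℝ := fun i => ((i : ℝ) + 1) ^ k
  have hg_ge_one (i : ℕ) : 1 ≤ g i := one_le_pow₀ (by linarith [(Nat.cast_nonneg i : (0 : ℝ) ≤ i)])
  have hsum_ge (n : ℕ) : (n : ℝ) ≤ ∑ i ∈ range n, g i := by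
    simpa using Finset.card_nsmul_le_sum (range n) g 1 fun i _ => hg_ge_one i
  have hsum_le (n : ℕ) : ∑ i ∈ range n, g i ≤ (n : ℝ) ^ (k + 1) := by
    calc ∑ i ∈ range n, g i ≤ ∑ _i ∈ range n, (n : ℝ) ^ k :=
          Finset.sum_le_sum fun i hi => pow_le_pow_left₀ (by positivity)
            (by exact_mod_cast Finset.mem_range.1 hi) k
      _ = (n : ℝ) ^ (k + 1) := by simp [pow_succ']
  have hsum_top : Tendsto (fun n => ∑ i ∈ range n, g i) atTop atTop :=
    tendsto_atTop_mono hsum_ge tendsto_natCast_atTop_atTop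
  have hdiff : (fun p => f (p + 1) - f p) =o[atTop] g :=
    h.trans_isBigO <| IsBigO.of_bound' <| Eventually.of_forall fun p => by
      rw [Real.norm_of_nonneg (by positivity), Real.norm_of_nonneg (by positivity)]
      exact pow_le_pow_left₀ (by positivity) (by linarith) k
  have hconst : (fun _ => f 0) =o[atTop] fun n => ∑ i ∈ range n, g i :=
    isLittleO_const_left.2 <| Or.inr <| tendsto_norm_atTop_atTop.comp hsum_top
  have hf : f =o[atTop] fun n => ∑ i ∈ range n, g i :=
    (hconst.add (hdiff.sum_range (fun i => by positivity) hsum_top)).congr_left fun n => by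
      simp only [Finset.sum_range_sub, add_sub_cancel]
  refine hf.trans_isBigO <| IsBigO.of_bound' <| Eventually.of_forall fun n => ?_
  rw [Real.norm_of_nonneg (by positivity), Real.norm_of_nonneg (by positivity)]
  exact hsum_le n

theorem isEquivalent_choose_add (a k : ℕ) :
    (fun q : ℕ => ((q + a).choose k : ℝ)) ~[atTop] fun q => (q.choose k : ℝ) := by
  have hshift : (fun q : ℕ => ((q + a : ℕ) : ℝ)) ~[atTop] fun q => (q : ℝ) := by
    simp only [Nat.cast_add]
    exact IsEquivalent.refl.add_isLittleO <| isLittleO_const_left.2 <| Or.inr <|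
      tendsto_norm_atTop_atTop.comp tendsto_natCast_atTop_atTop
  exact ((isEquivalent_choose k).comp_tendsto (tendsto_add_atTop_nat a)).trans
    (((hshift.pow k).div IsEquivalent.refl).trans (isEquivalent_choose k).symm)

structure IsCoverRecurrence (ψ : ℝ) (C : ℤ → ℕ → ℝ) : Prop where
  succ : ∀ (n : ℤ) (p : ℕ), 1 ≤ p →
    C n (p + 1) = ψ * C n p + C (n - 1) p + (1 - ψ) * C (n - 2) p
  of_nonpos : ∀ (n : ℤ) (p : ℕ), n ≤ 0 → C n p = 0
  one : ∀ n : ℤ, 1 ≤ n → C n 1 = 2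

/-- Indexed by `q = p - 1`: the recurrence only starts at `p = 1`, and `C n 0` is arbitrary. -/
noncomputable def scaledC (ψ : ℝ) (C : ℤ → ℕ → ℝ) (n : ℤ) (q : ℕ) : ℝ :=
  C n (q + 1) / ψ ^ (q + 1)

noncomputable def scaledErr (ψ : ℝ) (C : ℤ → ℕ → ℝ) (m q : ℕ) : ℝ :=
  scaledC ψ C (m + 1) q - 2 / ψ ^ (m + 1) * q.choose m

section IsCoverRecurrence

variable {ψ : ℝ} {C : ℤ → ℕ → ℝ}

lemma scaledC_of_nonpos (hzero : ∀ (n : ℤ) (p : ℕ), n ≤ 0 → C n p = 0) {n : ℤ} (hn : n ≤ 0)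
    (q : ℕ) : scaledC ψ C n q = 0 := by
  simp [scaledC, hzero n _ hn]

lemma scaledC_succ_sub (hψ : ψ ≠ 0)
    (hrec : ∀ (n : ℤ) (p : ℕ), 1 ≤ p →
      C n (p + 1) = ψ * C n p + C (n - 1) p + (1 - ψ) * C (n - 2) p) (n : ℤ) (q : ℕ) :
    scaledC ψ C n (q + 1) - scaledC ψ C n q =
      ψ⁻¹ * scaledC ψ C (n - 1) q + (1 - ψ) / ψ * scaledC ψ C (n - 2) q := by
  simp only [scaledC]
  rw [hrec n (q + 1) (by omega)]
  field_simp
  ring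

lemma scaledC_one (hψ : ψ ≠ 0) (hC : IsCoverRecurrence ψ C) (q : ℕ) :
    scaledC ψ C 1 q = 2 / ψ := by
  induction q with
  | zero => simp [scaledC, hC.one 1 le_rfl]
  | succ q ih =>
    have h := scaledC_succ_sub hψ hC.succ 1 q
    rw [scaledC_of_nonpos hC.of_nonpos (n := 1 - 1) (by norm_num),
      scaledC_of_nonpos hC.of_nonpos (n := 1 - 2) (by norm_num), ih] at h
    linarith

lemma scaledErr_succ_sub (hψ : ψ ≠ 0)
    (hrec : ∀ (n : ℤ) (p : ℕ), 1 ≤ p →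
      C n (p + 1) = ψ * C n p + C (n - 1) p + (1 - ψ) * C (n - 2) p) (m q : ℕ) :
    scaledErr ψ C (m + 1) (q + 1) - scaledErr ψ C (m + 1) q =
      ψ⁻¹ * scaledErr ψ C m q + (1 - ψ) / ψ * scaledC ψ C m q := by
  have h := scaledC_succ_sub hψ hrec ((m + 1 : ℕ) + 1) q
  simp only [Nat.cast_add, Nat.cast_one, add_sub_cancel_right,
    show (m : ℤ) + 1 + 1 - 2 = m by ring] at h
  simp only [scaledErr, Nat.choose_succ_succ', Nat.cast_add, Nat.cast_one] at h ⊢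
  linear_combination h

lemma scaledC_succ_isLittleO_of_scaledErr {m : ℕ}
    (h : scaledErr ψ C m =o[atTop] fun q : ℕ => (q : ℝ) ^ m) :
    scaledC ψ C (m + 1) =o[atTop] fun q : ℕ => (q : ℝ) ^ (m + 1) := by
  have hmain : (fun q : ℕ => 2 / ψ ^ (m + 1) * (q.choose m : ℝ)) =O[atTop]
      fun q : ℕ => (q : ℝ) ^ m :=
    (isTheta_choose m).isBigO.const_mul_left _
  have hO : scaledC ψ C (m + 1) =O[atTop] fun q : ℕ => (q : ℝ) ^ m :=
    (h.isBigO.add hmain).congr_left fun q => by simp [scaledErr]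
  exact hO.trans_isLittleO <|
    (isLittleO_pow_pow_atTop_of_lt m.lt_succ_self).comp_tendsto tendsto_natCast_atTop_atTop

lemma scaledErr_isLittleO_and_scaledC_isLittleO (hψ : ψ ≠ 0) (hC : IsCoverRecurrence ψ C)
    (m : ℕ) :
    scaledErr ψ C m =o[atTop] (fun q : ℕ => (q : ℝ) ^ m) ∧
      scaledC ψ C m =o[atTop] (fun q : ℕ => (q : ℝ) ^ m) := by
  induction m with
  | zero =>
    constructor
    · exact (isLittleO_zero _ _).congr_left fun q => by
        simp [scaledErr, scaledC_one hψ hC]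
    · exact (isLittleO_zero _ _).congr_left fun q =>
        (scaledC_of_nonpos hC.of_nonpos le_rfl q).symm
  | succ m ih =>
    refine ⟨isLittleO_pow_succ_of_sub_isLittleO ?_,
      by exact_mod_cast scaledC_succ_isLittleO_of_scaledErr ih.1⟩
    simp_rw [scaledErr_succ_sub hψ hC.succ]
    exact (ih.1.const_mul_left _).add (ih.2.const_mul_left _)

lemma scaledC_succ_isEquivalent (hψ : ψ ≠ 0) (hC : IsCoverRecurrence ψ C) (k : ℕ) :
    scaledC ψ C (k + 1) ~[atTop] fun q : ℕ => 2 / ψ ^ (k + 1) * ((q + k + 1).choose k : ℝ) := by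
  have hmain : (fun q : ℕ => (q : ℝ) ^ k) =O[atTop]
      fun q : ℕ => 2 / ψ ^ (k + 1) * (q.choose k : ℝ) :=
    (isTheta_choose k).symm.isBigO.const_mul_right (by positivity)
  have hequiv : scaledC ψ C (k + 1) ~[atTop] fun q : ℕ => 2 / ψ ^ (k + 1) * (q.choose k : ℝ) :=
    ((scaledErr_isLittleO_and_scaledC_isLittleO hψ hC k).1.trans_isBigO hmain :)
  exact hequiv.trans (IsEquivalent.refl.mul (isEquivalent_choose_add (k + 1) k).symm)

lemma coverC_succ_isEquivalent (hψ : ψ ≠ 0) (hC : IsCoverRecurrence ψ C) (k : ℕ) :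
    (fun q : ℕ => C (k + 1) (q + 1)) ~[atTop]
      fun q : ℕ => 2 * ((q + k + 1).choose k : ℝ) * ψ ^ ((q : ℤ) - k) := by
  refine ((IsEquivalent.refl (u := fun q : ℕ => ψ ^ (q + 1))).mul
    (scaledC_succ_isEquivalent hψ hC k)).congr_left ?_ |>.congr_right ?_
  · refine Eventually.of_forall fun q => ?_
    simp only [Pi.mul_apply, scaledC]
    field_simp
  · refine Eventually.of_forall fun q => ?_
    simp only [Pi.mul_apply, zpow_sub₀ hψ, zpow_natCast]
    field_simp
    ring

lemma tendsto_coverC_zero (hψ0 : 0 < ψ) (hψ1 : ψ < 1) (hC : IsCoverRecurrence ψ C) (m : ℕ) :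
    Tendsto (fun q => C m (q + 1)) atTop (𝓝 0) := by
  have hgeom : Tendsto (fun q : ℕ => (q : ℝ) ^ m * ψ ^ (q + 1)) atTop (𝓝 0) := by
    simpa [pow_succ, mul_assoc] using
      (tendsto_pow_const_mul_const_pow_of_abs_lt_one m (abs_lt.2 ⟨by linarith, hψ1⟩)).mul_const ψ
  refine (((scaledErr_isLittleO_and_scaledC_isLittleO hψ0.ne' hC m).2.isBigO.mul
    (isBigO_refl (fun q : ℕ => ψ ^ (q + 1)) atTop)).trans_tendsto hgeom).congr fun q => ?_
  simp [scaledC, hψ0.ne']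

end IsCoverRecurrence

/-- Asymptotics of the number of admissible dichotomies for pair-structured data
(`k = 2`): `C(n,p) ∼ 2·binom(p+n−1, n−1)·ψ^{p−n}` as `p → ∞` at fixed `n ≥ 1`;
in particular `C(n,p) → 0`. -/
theorem structured_coverC_asymptotics
    (ψ : ℝ) (hψ : ψ ∈ Set.Ioo (0 : ℝ) 1)
    (C : ℤ → ℕ → ℝ)
    (hrec : ∀ (n : ℤ) (p : ℕ), 1 ≤ p →
      C n (p + 1) = ψ * C n p + C (n - 1) p + (1 - ψ) * C (n - 2) p)
    (hzero : ∀ (n : ℤ) (p : ℕ), n ≤ 0 → C n p = 0)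
    (hbc : ∀ n : ℤ, 1 ≤ n → C n 1 = 2)
    (n : ℕ) (hn : 1 ≤ n) :
    Tendsto (fun p : ℕ =>
        C (n : ℤ) p /
          (2 * (Nat.choose (p + n - 1) (n - 1) : ℝ) * ψ ^ ((p : ℤ) - (n : ℤ))))
      atTop (nhds 1) ∧
    Tendsto (fun p : ℕ => C (n : ℤ) p) atTop (nhds 0) := by
  obtain ⟨hψ0, hψ1⟩ := hψ
  have hC : IsCoverRecurrence ψ C := ⟨hrec, hzero, hbc⟩
  obtain ⟨k, rfl⟩ : ∃ k, n = k + 1 := ⟨n - 1, by omega⟩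
  refine ⟨?_, ?_⟩
  · rw [← tendsto_add_atTop_iff_nat 1]
    have hpos (q : ℕ) : 2 * ((q + k + 1).choose k : ℝ) * ψ ^ ((q : ℤ) - k) ≠ 0 :=
      mul_ne_zero (mul_ne_zero two_ne_zero (Nat.cast_ne_zero.2 (Nat.choose_pos (by omega)).ne'))
        (zpow_ne_zero _ hψ0.ne')
    refine ((isEquivalent_iff_tendsto_one (Eventually.of_forall hpos)).1
      (coverC_succ_isEquivalent hψ0.ne' hC k)).congr fun q => ?_
    rw [Pi.div_apply, show q + 1 + (k + 1) - 1 = q + k + 1 by omega, Nat.add_sub_cancel]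
    push_cast
    ring_nf
  · rw [← tendsto_add_atTop_iff_nat 1]
    exact tendsto_coverC_zero hψ0 hψ1 hC (k + 1)
end

section
/- Let α*(ψ) be the largest solution of (α+1)·log(α+1) − α·log α + (α−1)·log ψ = 0 for ψ ∈ (0,1). Then α*(ψ) → 1 as ψ → 0⁺ and α*(ψ) → ∞ as ψ → 1⁻. -/
/-!
Write the equation as `entropyGain α + (α - 1) * c = 0` with `c = log ψ < 0`. Since
`entropyGain α > 0`, every positive root exceeds `1`; since `log (1 + 1/α) ≤ 1/α` gives
`entropyGain α ≤ 1 + log (α + 1) ≤ α + 2`, a root satisfies `(α - 1) (-c - 1) ≤ 2`, so all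
roots collapse to `1` as `c → -∞`. Conversely, for fixed `M > 0` the left side is positive at
`M` once `c` is close to `0`, while it tends to `-∞` as `α → ∞` because `entropyGain` grows
only logarithmically; the intermediate value theorem then gives a root beyond `M`, and the
largest root `α*(ψ)` lies above it.
-/

open Filter Real

noncomputable def entropyGain (α : ℝ) : ℝ :=
  (α + 1) * log (α + 1) - α * log α

@[fun_prop]
theorem continuous_entropyGain : Continuous entropyGain :=
  (continuous_mul_log.comp (continuous_add_const 1)).sub continuous_mul_log

theorem entropyGain_pos {α : ℝ} (hα : 0 < α) : 0 < entropyGain α := by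
  have hlog_lt : log α < log (α + 1) := log_lt_log hα (by linarith)
  have hlog_pos : 0 < log (α + 1) := log_pos (by linarith)
  unfold entropyGain
  nlinarith [mul_pos hα (sub_pos.2 hlog_lt)]

theorem entropyGain_le {α : ℝ} (hα : 0 < α) : entropyGain α ≤ 1 + log (α + 1) := by
  have hratio : log (α + 1) - log α ≤ 1 / α := by
    rw [← log_div (by linarith) hα.ne']
    calc log ((α + 1) / α) ≤ (α + 1) / α - 1 := log_le_sub_one_of_pos (by positivity)
      _ = 1 / α := by field_simp; ring
  have hgap : α * (log (α + 1) - log α) ≤ 1 := by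
    calc α * (log (α + 1) - log α) ≤ α * (1 / α) := mul_le_mul_of_nonneg_left hratio hα.le
      _ = 1 := by field_simp
  unfold entropyGain
  linarith

section Roots

variable {c α : ℝ}

theorem one_lt_of_entropyGain_add_mul_eq_zero (hc : c < 0) (hα : 0 < α)
    (hroot : entropyGain α + (α - 1) * c = 0) : 1 < α := by
  by_contra! h
  nlinarith [entropyGain_pos hα]

theorem le_one_add_of_entropyGain_add_mul_eq_zero (hc : c < -1) (hα : 0 < α)
    (hroot : entropyGain α + (α - 1) * c = 0) : α ≤ 1 + 2 / (-c - 1) := by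
  have hlog : log (α + 1) ≤ α := by linarith [log_le_sub_one_of_pos (by linarith : 0 < α + 1)]
  have hbound : (α - 1) * (-c - 1) ≤ 2 := by nlinarith [entropyGain_le hα]
  rw [← sub_le_iff_le_add', le_div_iff₀ (by linarith)]
  exact hbound

theorem tendsto_entropyGain_add_mul_atBot (hc : c < 0) :
    Tendsto (fun α => entropyGain α + (α - 1) * c) atTop atBot := by
  have hlog : ∀ᶠ α in atTop, log (α + 1) ≤ -c / 2 * (α + 1) := by
    filter_upwards [(tendsto_atTop_add_const_right _ 1 tendsto_id).eventually
      (isLittleO_log_id_atTop.bound (by linarith : 0 < -c / 2)), eventually_gt_atTop 0]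
      with α hα hα0
    simp only [id, norm_eq_abs, abs_of_pos (by linarith : 0 < α + 1)] at hα
    exact (le_abs_self _).trans hα
  refine tendsto_atBot_mono' _ ?_ (tendsto_atBot_add_const_right _ (1 - 3 * c / 2)
    (tendsto_id.const_mul_atTop_of_neg (by linarith : c / 2 < 0)))
  filter_upwards [hlog, eventually_gt_atTop 0] with α hα hα0
  have := entropyGain_le hα0
  simp only [id]
  nlinarith

theorem exists_entropyGain_add_mul_eq_zero_ge {M : ℝ} (hc : c < 0) (hM : 0 < M)
    (hpos : 0 < entropyGain M + (M - 1) * c) :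
    ∃ β, M ≤ β ∧ 0 < β ∧ entropyGain β + (β - 1) * c = 0 := by
  have hcont : Continuous fun α => entropyGain α + (α - 1) * c := by fun_prop
  obtain ⟨β, hβM, hβ⟩ := intermediate_value_Ici' hcont.continuousOn
    (tendsto_entropyGain_add_mul_atBot hc) (Set.mem_Iic.2 hpos.le)
  exact ⟨β, hβM, hM.trans_le hβM, hβ⟩

end Roots

theorem tendsto_nhds_one_of_entropyGain_add_mul_log_eq_zero {a : ℝ → ℝ}
    (ha : ∀ ψ ∈ Set.Ioo (0 : ℝ) 1,
      0 < a ψ ∧ entropyGain (a ψ) + (a ψ - 1) * log ψ = 0) :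
    Tendsto a (nhdsWithin 0 (Set.Ioo 0 1)) (nhds 1) := by
  have hlog : Tendsto log (nhdsWithin 0 (Set.Ioo 0 1)) atBot :=
    tendsto_log_nhdsGT_zero.mono_left (nhdsWithin_mono _ Set.Ioo_subset_Ioi_self)
  have hupper :
      Tendsto (fun ψ => 1 + 2 / (-log ψ - 1)) (nhdsWithin 0 (Set.Ioo 0 1)) (nhds 1) := by
    simpa only [add_zero, sub_eq_add_neg, Function.comp_apply] using
      tendsto_const_nhds.add (tendsto_const_nhds.div_atTop
        (tendsto_atTop_add_const_right _ (-1) (tendsto_neg_atBot_atTop.comp hlog)))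
  refine tendsto_of_tendsto_of_tendsto_of_le_of_le' tendsto_const_nhds hupper ?_ ?_
  · filter_upwards [self_mem_nhdsWithin] with ψ hψ
    exact (one_lt_of_entropyGain_add_mul_eq_zero (log_neg hψ.1 hψ.2) (ha ψ hψ).1
      (ha ψ hψ).2).le
  · filter_upwards [self_mem_nhdsWithin, hlog.eventually (eventually_lt_atBot (-1))]
      with ψ hψ hψlog
    exact le_one_add_of_entropyGain_add_mul_eq_zero hψlog (ha ψ hψ).1 (ha ψ hψ).2

theorem tendsto_atTop_of_forall_entropyGain_add_mul_log_eq_zero_le {a : ℝ → ℝ}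
    (ha : ∀ ψ ∈ Set.Ioo (0 : ℝ) 1,
      ∀ β, 0 < β → entropyGain β + (β - 1) * log ψ = 0 → β ≤ a ψ) :
    Tendsto a (nhdsWithin 1 (Set.Ioo 0 1)) atTop := by
  rw [tendsto_atTop]
  intro b
  set M := max b 1
  have hM : 0 < M := lt_max_of_lt_right one_pos
  have hlog : Tendsto log (nhdsWithin 1 (Set.Ioo 0 1)) (nhds 0) := by
    simpa using (continuousAt_log one_ne_zero).tendsto.mono_left nhdsWithin_le_nhds
  have hpos : ∀ᶠ ψ in nhdsWithin 1 (Set.Ioo 0 1), 0 < entropyGain M + (M - 1) * log ψ :=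
    (tendsto_const_nhds.add (tendsto_const_nhds.mul hlog)).eventually_const_lt
      (by simpa using entropyGain_pos hM)
  filter_upwards [self_mem_nhdsWithin, hpos] with ψ hψ hψpos
  obtain ⟨β, hMβ, hβ, hβroot⟩ :=
    exists_entropyGain_add_mul_eq_zero_ge (log_neg hψ.1 hψ.2) hM hψpos
  exact (le_max_left b 1).trans (hMβ.trans (ha ψ hψ β hβ hβroot))

/-- `α*(ψ)`, the largest positive solution of
`(α+1)·log(α+1) − α·log α + (α−1)·log ψ = 0`, tends to `1` as `ψ → 0⁺` and
to `∞` as `ψ → 1⁻`. -/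
theorem alphaStar_limits
    (αStar : ℝ → ℝ)
    (hroot : ∀ ψ ∈ Set.Ioo (0 : ℝ) 1,
      0 < αStar ψ ∧
      (αStar ψ + 1) * Real.log (αStar ψ + 1) - αStar ψ * Real.log (αStar ψ)
        + (αStar ψ - 1) * Real.log ψ = 0 ∧
      ∀ β : ℝ, 0 < β →
        (β + 1) * Real.log (β + 1) - β * Real.log β + (β - 1) * Real.log ψ = 0 →
        β ≤ αStar ψ) :
    Tendsto αStar (nhdsWithin 0 (Set.Ioo 0 1)) (nhds 1) ∧
    Tendsto αStar (nhdsWithin 1 (Set.Ioo 0 1)) atTop :=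
  ⟨tendsto_nhds_one_of_entropyGain_add_mul_log_eq_zero fun ψ hψ =>
      ⟨(hroot ψ hψ).1, (hroot ψ hψ).2.1⟩,
    tendsto_atTop_of_forall_entropyGain_add_mul_log_eq_zero_le fun ψ hψ =>
      (hroot ψ hψ).2.2⟩
end

section
/- Let ψ₂, …, ψ_k ∈ (0,1] and define θ^k_l by θ^k_l = ψ_k·θ^{k−1}_l + (1−ψ_k)·θ^{k−1}_{l−1} with θ^1_0 = θ^1_1 = 1 and θ^k_{−1} = θ^k_{k+1} = 0. Then θ^k_1 = (2 − k + ∑_{m=2}^k 1/ψ_m) · ∏_{m=2}^k ψ_m. -/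
/-- The coefficients `θ^k_l` of the simplex-learning recurrence satisfy
`θ^k_1 = (2 − k + ∑_{m=2}^k 1/ψ_m) · ∏_{m=2}^k ψ_m`. -/
theorem theta_one_formula
    (ψ : ℕ → ℝ) (hψ : ∀ m, 2 ≤ m → ψ m ∈ Set.Ioc (0 : ℝ) 1)
    (θ : ℕ → ℤ → ℝ)
    (h1 : θ 1 0 = 1) (h1' : θ 1 1 = 1)
    (hbd : ∀ k : ℕ, 1 ≤ k → θ k (-1) = 0 ∧ θ k ((k : ℤ) + 1) = 0)
    (hrec : ∀ k : ℕ, 2 ≤ k → ∀ l : ℤ, 0 ≤ l → l ≤ (k : ℤ) →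
      θ k l = ψ k * θ (k - 1) l + (1 - ψ k) * θ (k - 1) (l - 1)) :
    ∀ k : ℕ, 1 ≤ k →
      θ k 1 = (2 - (k : ℝ) + ∑ m ∈ Finset.Icc 2 k, 1 / ψ m) * ∏ m ∈ Finset.Icc 2 k, ψ m := by
  have h0 : ∀ k, 1 ≤ k → θ k 0 = ∏ m ∈ Finset.Icc 2 k, ψ m := by
    intro k hk
    induction k, hk using Nat.le_induction with
    | base => simpa using h1
    | succ n hn ih =>
      have h2 : 2 ≤ n + 1 := by omega
      have := hrec (n + 1) h2 0 (by norm_num) (by exact_mod_cast Nat.zero_le (n + 1))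
      simp only [Nat.add_sub_cancel, show (0:ℤ)-1 = -1 from rfl] at this
      rw [this, (hbd n hn).1, ih, Finset.prod_Icc_succ_top h2]
      norm_num
      ring
  intro k hk
  induction k, hk using Nat.le_induction with
  | base =>
    rw [show Finset.Icc 2 1 = ∅ from Finset.Icc_eq_empty (by omega)]
    simp [h1']
    norm_num
  | succ n hn ih =>
    have h2 : 2 ≤ n + 1 := by omega
    have hne : ψ (n + 1) ≠ 0 := ne_of_gt (hψ (n + 1) h2).1
    have := hrec (n + 1) h2 1 (by norm_num) (by exact_mod_cast Nat.one_le_iff_ne_zero.mpr (by omega))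
    simp only [Nat.add_sub_cancel, show (1:ℤ)-1 = 0 from rfl] at this
    rw [this]
    norm_num
    rw [ih, h0 n hn, Finset.prod_Icc_succ_top h2, Finset.sum_Icc_succ_top h2]
    field_simp
    ring
end

section
/- Fix k ≥ 2 and t ∈ [0,1], and define f(x₁,…,x_{k−1}) = (2 − k + ∑_{m=1}^{k−1} 1/x_m)·∏_{m=1}^{k−1} x_m on (0,1]^{k−1} subject to ∏_{m=1}^{k−1} x_m = t. Then for t > 0, the supremum of f over this constrained set equals 1, and the infimum equals (k−1)·t^{1−1/(k−1)} + (2−k)·t. -/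
/-!
On the fibre `∏ x = t` the objective equals `(2 - k) t + ∑ₘ ∏_{j ≠ m} x_j`. For `x ∈ [0,1]^{k-1}`
one has `∑ₘ ∏_{j ≠ m} x_j ≤ 1 + (k - 2) ∏ x`, by induction on the number of factors, with
equality at `(t, 1, …, 1)`; this gives the supremum `1`. For the infimum, AM-GM applied to the
`1 / x_m` gives `∑ 1 / x_m ≥ (k - 1) t^{-1/(k-1)}`, with equality at the constant point
`x_m = t^{1/(k-1)}`.
-/

open Finset

section

variable {ι : Type*}

theorem Finset.sum_prod_erase_le_one_add [DecidableEq ι] (s : Finset ι) {x : ι → ℝ}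
    (hx : ∀ i ∈ s, x i ∈ Set.Icc (0 : ℝ) 1) :
    ∑ i ∈ s, ∏ j ∈ s.erase i, x j ≤ 1 + (#s - 1 : ℝ) * ∏ j ∈ s, x j := by
  induction s using Finset.induction_on with
  | empty => simp
  | @insert a s ha ih =>
    have hxa := hx a (mem_insert_self a s)
    have hxs : ∀ i ∈ s, x i ∈ Set.Icc (0 : ℝ) 1 := fun i hi => hx i (mem_insert_of_mem hi)
    have hP1 : ∏ j ∈ s, x j ≤ 1 :=
      prod_le_one (fun i hi => (hxs i hi).1) fun i hi => (hxs i hi).2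
    have herase : ∀ i ∈ s, ∏ j ∈ (insert a s).erase i, x j = x a * ∏ j ∈ s.erase i, x j :=
      fun i hi => by
        rw [erase_insert_of_ne (ne_of_mem_of_not_mem hi ha).symm,
          prod_insert fun h => ha (mem_of_mem_erase h)]
    rw [sum_insert ha, erase_insert ha, sum_congr rfl herase, ← mul_sum,
      card_insert_of_notMem ha, prod_insert ha]
    have := mul_le_mul_of_nonneg_left (ih hxs) hxa.1
    push_cast
    -- the step costs exactly `(1 - x a) * (1 - ∏ j ∈ s, x j) ≥ 0`
    nlinarith [mul_nonneg (sub_nonneg.2 hxa.2) (sub_nonneg.2 hP1)]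

theorem Finset.sum_inv_mul_prod [DecidableEq ι] (s : Finset ι) {x : ι → ℝ}
    (hx : ∀ i ∈ s, x i ≠ 0) :
    (∑ i ∈ s, (x i)⁻¹) * ∏ i ∈ s, x i = ∑ i ∈ s, ∏ j ∈ s.erase i, x j := by
  rw [sum_mul]
  refine sum_congr rfl fun i hi => ?_
  rw [← mul_prod_erase s x hi, inv_mul_cancel_left₀ (hx i hi)]

theorem Real.card_mul_prod_rpow_inv_card_le_sum (s : Finset ι) (hs : s.Nonempty) {z : ι → ℝ}
    (hz : ∀ i ∈ s, 0 ≤ z i) :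
    #s * (∏ i ∈ s, z i) ^ (#s : ℝ)⁻¹ ≤ ∑ i ∈ s, z i := by
  have hcard : (0 : ℝ) < #s := by exact_mod_cast hs.card_pos
  have := Real.geom_mean_le_arith_mean s (fun _ => 1) z (fun _ _ => zero_le_one)
    (by simpa using hcard) hz
  simp only [Real.rpow_one, sum_const, nsmul_eq_mul, mul_one, one_mul] at this
  rwa [le_div_iff₀ hcard, mul_comm] at this

/-- `θ^k_1` in the geometry parameters `x m = ψ_{m+1}`, with `k - 1 = card ι`. -/
noncomputable def thetaOne [Fintype ι] (x : ι → ℝ) : ℝ :=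
  (1 - Fintype.card ι + ∑ i, 1 / x i) * ∏ i, x i

variable [Fintype ι] {x : ι → ℝ} {t : ℝ}

theorem thetaOne_le_one (hx : ∀ i, x i ∈ Set.Ioc (0 : ℝ) 1) : thetaOne x ≤ 1 := by
  classical
  have heq := sum_inv_mul_prod univ fun i _ => (hx i).1.ne'
  have hle := sum_prod_erase_le_one_add univ fun i _ => Set.Ioc_subset_Icc_self (hx i)
  rw [card_univ] at hle
  simp only [thetaOne, one_div, add_mul] at heq ⊢
  linarith

theorem le_thetaOne [Nonempty ι] (hx : ∀ i, 0 < x i) :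
    Fintype.card ι * (∏ i, x i) ^ (1 - 1 / (Fintype.card ι : ℝ))
      + (1 - Fintype.card ι) * ∏ i, x i ≤ thetaOne x := by
  have hP : 0 < ∏ i, x i := prod_pos fun i _ => hx i
  have hamgm := Real.card_mul_prod_rpow_inv_card_le_sum univ univ_nonempty
    (z := fun i => 1 / x i) fun i _ => (one_div_pos.2 (hx i)).le
  rw [prod_div_distrib, prod_const_one, card_univ] at hamgm
  have hpow : (∏ i, x i) ^ (1 - 1 / (Fintype.card ι : ℝ)) =
      (1 / ∏ i, x i) ^ (Fintype.card ι : ℝ)⁻¹ * ∏ i, x i := by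
    rw [one_div (∏ i, x i), Real.inv_rpow hP.le, ← Real.rpow_neg hP.le, ← Real.rpow_add_one hP.ne']
    ring_nf
  have := mul_le_mul_of_nonneg_right hamgm hP.le
  rw [thetaOne, hpow]
  nlinarith

theorem thetaOne_mulSingle [DecidableEq ι] (i : ι) (ht : t ≠ 0) :
    thetaOne (Pi.mulSingle i t) = 1 := by
  have hsum : ∑ j, 1 / Pi.mulSingle i t j = 1 / t + (Fintype.card ι - 1) := by
    rw [← add_sum_erase univ _ (mem_univ i), Pi.mulSingle_eq_same,
      sum_congr rfl fun j hj => by rw [Pi.mulSingle_eq_of_ne (ne_of_mem_erase hj)]]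
    simp [card_univ, Nat.cast_sub (Fintype.card_pos_iff.2 ⟨i⟩)]
  rw [thetaOne, Fintype.prod_pi_mulSingle', hsum]
  field_simp
  ring

theorem prod_const_rpow_one_div_card [Nonempty ι] (ht : 0 ≤ t) :
    ∏ _ : ι, t ^ (1 / (Fintype.card ι : ℝ)) = t := by
  rw [prod_const, card_univ, ← Real.rpow_natCast, ← Real.rpow_mul ht,
    one_div_mul_cancel (by exact_mod_cast Fintype.card_ne_zero), Real.rpow_one]

theorem thetaOne_const_rpow [Nonempty ι] (ht : 0 < t) :
    thetaOne (fun _ : ι => t ^ (1 / (Fintype.card ι : ℝ))) =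
      Fintype.card ι * t ^ (1 - 1 / (Fintype.card ι : ℝ)) + (1 - Fintype.card ι) * t := by
  have hsum : ∑ _ : ι, 1 / t ^ (1 / (Fintype.card ι : ℝ)) =
      Fintype.card ι * t ^ (-(1 / (Fintype.card ι : ℝ))) := by
    rw [sum_const, card_univ, nsmul_eq_mul, one_div (t ^ _), ← Real.rpow_neg ht.le]
  have hpow : t ^ (1 - 1 / (Fintype.card ι : ℝ)) = t ^ (-(1 / (Fintype.card ι : ℝ))) * t := by
    rw [← Real.rpow_add_one ht.ne']
    ring_nf
  rw [thetaOne, prod_const_rpow_one_div_card ht.le, hsum, hpow]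
  ring

theorem isGreatest_image_thetaOne [Nonempty ι] (ht0 : 0 < t) (ht1 : t ≤ 1) :
    IsGreatest (thetaOne '' {x : ι → ℝ | (∀ i, x i ∈ Set.Ioc (0 : ℝ) 1) ∧ ∏ i, x i = t}) 1 := by
  classical
  obtain ⟨i⟩ := ‹Nonempty ι›
  refine ⟨⟨Pi.mulSingle i t, ⟨fun j => ?_, Fintype.prod_pi_mulSingle' i t⟩,
    thetaOne_mulSingle i ht0.ne'⟩, ?_⟩
  · rcases eq_or_ne j i with rfl | hj
    · simp [ht0, ht1]
    · simp [hj]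
  · rintro _ ⟨x, ⟨hx, -⟩, rfl⟩
    exact thetaOne_le_one hx

theorem isLeast_image_thetaOne [Nonempty ι] (ht0 : 0 < t) (ht1 : t ≤ 1) :
    IsLeast (thetaOne '' {x : ι → ℝ | (∀ i, x i ∈ Set.Ioc (0 : ℝ) 1) ∧ ∏ i, x i = t})
      (Fintype.card ι * t ^ (1 - 1 / (Fintype.card ι : ℝ)) + (1 - Fintype.card ι) * t) := by
  refine ⟨⟨_, ⟨fun _ => ⟨Real.rpow_pos_of_pos ht0 _, Real.rpow_le_one ht0.le ht1 (by positivity)⟩,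
    prod_const_rpow_one_div_card ht0.le⟩, thetaOne_const_rpow ht0⟩, ?_⟩
  rintro _ ⟨x, ⟨hx, rfl⟩, rfl⟩
  exact le_thetaOne fun i => (hx i).1

end

/-- Constrained optimization of `θ^k_1` at fixed `θ^k_0 = t`:
for `f(x) = (2 − k + ∑ 1/x_m)·∏ x_m` on `(0,1]^{k−1}` with `∏ x_m = t > 0`,
the supremum is `1` and the infimum is `(k−1)·t^{1−1/(k−1)} + (2−k)·t`. -/
theorem theta_one_constrained_optimization (k : ℕ) (hk : 2 ≤ k)
    (t : ℝ) (ht : t ∈ Set.Icc (0 : ℝ) 1) (ht0 : 0 < t) :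
    let S : Set ℝ := {y | ∃ x : Fin (k - 1) → ℝ,
      (∀ m, x m ∈ Set.Ioc (0 : ℝ) 1) ∧ (∏ m, x m = t) ∧
      y = (2 - (k : ℝ) + ∑ m, 1 / x m) * ∏ m, x m}
    sSup S = 1 ∧
    sInf S = ((k : ℝ) - 1) * t ^ (1 - 1 / ((k : ℝ) - 1)) + (2 - (k : ℝ)) * t := by
  intro S
  have : NeZero (k - 1) := ⟨by omega⟩
  have hcard : (Fintype.card (Fin (k - 1)) : ℝ) = k - 1 := by
    simp [Nat.cast_sub (by omega : 1 ≤ k)]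
  have hS :
      S = thetaOne '' {x : Fin (k - 1) → ℝ | (∀ i, x i ∈ Set.Ioc (0 : ℝ) 1) ∧ ∏ i, x i = t} := by
    ext y
    constructor
    · rintro ⟨x, hx, hprod, rfl⟩
      exact ⟨x, ⟨hx, hprod⟩, by rw [thetaOne, hcard]; ring⟩
    · rintro ⟨x, ⟨hx, hprod⟩, rfl⟩
      exact ⟨x, hx, hprod, by rw [thetaOne, hcard]; ring⟩
  have hmin := (isLeast_image_thetaOne (ι := Fin (k - 1)) ht0 ht.2).csInf_eq
  rw [hcard] at hmin
  rw [hS, hmin]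
  exact ⟨(isGreatest_image_thetaOne ht0 ht.2).csSup_eq, by ring⟩
end

section
/- For t ∈ (0,1), the function k ↦ (k−1)·t^{1−1/(k−1)} + (2−k)·t is strictly decreasing in k ≥ 2 and converges, as k → ∞, to t·(1 − log t). Consequently, for all k ≥ 2 and all admissible geometries, θ^k_1 > θ^k_0·(1 − log θ^k_0) whenever 0 < θ^k_0 < 1. -/
open Filter Real

/-- The infimum `(k−1)·t^{1−1/(k−1)} + (2−k)·t` of `θ^k_1` at fixed `θ^k_0 = t`
is strictly decreasing in `k ≥ 2` and tends to `t·(1 − log t)` as `k → ∞`;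
hence `θ^k_1 > θ^k_0·(1 − log θ^k_0)` whenever `0 < θ^k_0 < 1`. -/
theorem theta_one_lower_bound (t : ℝ) (ht : t ∈ Set.Ioo (0 : ℝ) 1) :
    let φ : ℕ → ℝ := fun k =>
      ((k : ℝ) - 1) * t ^ (1 - 1 / ((k : ℝ) - 1)) + (2 - (k : ℝ)) * t
    StrictAntiOn φ {k : ℕ | 2 ≤ k} ∧
    Tendsto φ atTop (nhds (t * (1 - Real.log t))) ∧
    (∀ k : ℕ, 2 ≤ k → ∀ ψ : ℕ → ℝ, (∀ m, 2 ≤ m → ψ m ∈ Set.Ioc (0 : ℝ) 1) →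
      (∏ m ∈ Finset.Icc 2 k, ψ m) = t →
      (2 - (k : ℝ) + ∑ m ∈ Finset.Icc 2 k, 1 / ψ m) * ∏ m ∈ Finset.Icc 2 k, ψ m
        > t * (1 - Real.log t)) := by
  obtain ⟨ht0, ht1⟩ := ht
  intro φ
  have hlogt : Real.log t < 0 := Real.log_neg ht0 ht1
  set a : ℝ := -Real.log t with ha
  have ha0 : 0 < a := by simp only [ha]; linarith
  -- key identity for k ≥ 2
  have key : ∀ k : ℕ, 2 ≤ k →
      φ k = t * (a * ((Real.exp (a / ((k : ℝ) - 1)) - 1) / (a / ((k : ℝ) - 1))) + 1) := by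
    intro k hk
    have hk2 : (2 : ℝ) ≤ (k : ℝ) := by exact_mod_cast hk
    have hs0 : (0 : ℝ) < (k : ℝ) - 1 := by linarith
    have hrw : t ^ (1 - 1 / ((k : ℝ) - 1)) = t * Real.exp (a / ((k : ℝ) - 1)) := by
      rw [Real.rpow_def_of_pos ht0]
      have : Real.log t * (1 - 1 / ((k : ℝ) - 1)) = Real.log t + a / ((k : ℝ) - 1) := by
        simp only [ha]; ring
      rw [this, Real.exp_add, Real.exp_log ht0]
    simp only [φ, hrw]
    field_simp
    ring
  constructor
  · -- strictly decreasing
    intro k hk l hl hkl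
    simp only [Set.mem_setOf_eq] at hk hl
    have hk2 : (2 : ℝ) ≤ (k : ℝ) := by exact_mod_cast hk
    have hl2 : (2 : ℝ) ≤ (l : ℝ) := by exact_mod_cast hl
    have hklr : (k : ℝ) - 1 < (l : ℝ) - 1 := by
      have : (k : ℝ) < (l : ℝ) := by exact_mod_cast hkl
      linarith
    rw [key k hk, key l hl]
    set uk := a / ((k : ℝ) - 1) with huk
    set ul := a / ((l : ℝ) - 1) with hul
    have hul0 : 0 < ul := div_pos ha0 (by linarith)
    have hlk : ul < uk := by
      apply div_lt_div_of_pos_left ha0 (by linarith) hklr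
    have huk0 : 0 < uk := lt_trans hul0 hlk
    have hsec := strictConvexOn_exp.secant_strict_mono (Set.mem_univ (0 : ℝ))
      (Set.mem_univ ul) (Set.mem_univ uk) (ne_of_gt hul0) (ne_of_gt huk0) hlk
    rw [Real.exp_zero, sub_zero, sub_zero] at hsec
    gcongr
  · constructor
    · -- limit
      have hu : Tendsto (fun k : ℕ => a / ((k : ℝ) - 1)) atTop (nhds 0) := by
        apply Tendsto.div_atTop tendsto_const_nhds
        have := tendsto_atTop_add_const_right atTop (-1 : ℝ) tendsto_natCast_atTop_atTop
        simpa [sub_eq_add_neg] using this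
      have hu' : Tendsto (fun k : ℕ => a / ((k : ℝ) - 1)) atTop (nhdsWithin 0 {(0:ℝ)}ᶜ) := by
        apply tendsto_nhdsWithin_of_tendsto_nhds_of_eventually_within _ hu
        filter_upwards [eventually_ge_atTop 2] with k hk
        have hk2 : (2 : ℝ) ≤ (k : ℝ) := by exact_mod_cast hk
        have : 0 < a / ((k : ℝ) - 1) := div_pos ha0 (by linarith)
        simpa using ne_of_gt this
      have hslope : Tendsto (slope Real.exp 0) (nhdsWithin 0 {(0:ℝ)}ᶜ) (nhds 1) := by
        have := hasDerivAt_iff_tendsto_slope.mp (Real.hasDerivAt_exp 0)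
        simpa [Real.exp_zero] using this
      have h3 : Tendsto (fun k : ℕ => slope Real.exp 0 (a / ((k : ℝ) - 1))) atTop (nhds 1) :=
        hslope.comp hu'
      have h4 : Tendsto (fun k : ℕ => t * (a * slope Real.exp 0 (a / ((k : ℝ) - 1)) + 1))
          atTop (nhds (t * (a * 1 + 1))) :=
        (((h3.const_mul a).add_const 1).const_mul t)
      have hval : t * (a * 1 + 1) = t * (1 - Real.log t) := by simp only [ha]; ring
      rw [hval] at h4
      apply h4.congr'
      filter_upwards [eventually_ge_atTop 2] with k hk
      rw [key k hk, slope_def_field]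
      rw [Real.exp_zero, sub_zero]
    · -- the inequality
      intro k hk ψ hψ hprod
      rw [hprod]
      have hpos : ∀ m ∈ Finset.Icc 2 k, 0 < ψ m := fun m hm =>
        (hψ m (Finset.mem_Icc.mp hm).1).1
      have hle1 : ∀ m ∈ Finset.Icc 2 k, ψ m ≤ 1 := fun m hm =>
        (hψ m (Finset.mem_Icc.mp hm).1).2
      have hlog : ∑ m ∈ Finset.Icc 2 k, Real.log (ψ m) = Real.log t := by
        rw [← hprod, Real.log_prod]
        exact fun m hm => ne_of_gt (hpos m hm)
      have hcard : ((Finset.Icc 2 k).card : ℝ) = (k : ℝ) - 1 := by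
        rw [Nat.card_Icc]
        have : k + 1 - 2 = k - 1 := by omega
        rw [this]
        have : (1:ℕ) ≤ k := by omega
        push_cast [this]
        ring
      have hex : ∃ m ∈ Finset.Icc 2 k, ψ m ≠ 1 := by
        by_contra h
        push_neg at h
        rw [Finset.prod_congr rfl h, Finset.prod_const_one] at hprod
        linarith
      have hsum : ∑ m ∈ Finset.Icc 2 k, (1 - Real.log (ψ m)) <
          ∑ m ∈ Finset.Icc 2 k, 1 / ψ m := by
        apply Finset.sum_lt_sum
        · intro m hm
          have hx := hpos m hm
          have h := Real.log_le_sub_one_of_pos (show 0 < (ψ m)⁻¹ from inv_pos.mpr hx)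
          rw [Real.log_inv] at h
          rw [one_div]
          linarith
        · obtain ⟨m, hm, hne⟩ := hex
          refine ⟨m, hm, ?_⟩
          have hx := hpos m hm
          have h := Real.log_lt_sub_one_of_pos (show 0 < (ψ m)⁻¹ from inv_pos.mpr hx)
            (by simpa using inv_ne_one.mpr hne)
          rw [Real.log_inv] at h
          rw [one_div]
          linarith
      have hsum' : ((k : ℝ) - 1) - Real.log t < ∑ m ∈ Finset.Icc 2 k, 1 / ψ m := by
        have : ∑ m ∈ Finset.Icc 2 k, (1 - Real.log (ψ m)) =
            ((k : ℝ) - 1) - Real.log t := by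
          rw [Finset.sum_sub_distrib, hlog, Finset.sum_const, nsmul_eq_mul, mul_one, hcard]
        linarith [hsum, this.symm.le]
      have hdiff : 0 < (2 - (k : ℝ) + ∑ m ∈ Finset.Icc 2 k, 1 / ψ m) - (1 - Real.log t) := by
        linarith
      nlinarith [mul_pos ht0 hdiff]
end

section
/- Let θ₀ ∈ (0,1) and θ₁ > 0, and suppose g_n(z) satisfies g_n(z) = (z/(1 − θ₀ z))·[2 + ∑_{l=1}^k θ_l g_{n−l}(z)] with g_n = 0 for n ≤ 0, where θ_l ≥ 0 are constants. Then each g_n is a rational function whose unique pole is at z₀ = 1/θ₀, the pole has order n, and the leading (most singular) Laurent term at z₀ is 2·θ₁^{n−1}·(z/(1 − θ₀ z))^n's leading term; equivalently lim_{z→z₀} (z₀ − z)^n g_n(z) = 2·θ₁^{n−1}·θ₀^{−2n}. -/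
/-!
With `z₀ = θ₀⁻¹` one has `1 - θ₀ z = θ₀ (z₀ - z)`, so multiplying the recurrence by `(z₀ - z)ⁿ` gives
`(z₀ - z)ⁿ gₙ(z) = (z/θ₀)·[2 (z₀ - z)ⁿ⁻¹ + ∑ₗ θₗ (z₀ - z)ˡ⁻¹ · (z₀ - z)ⁿ⁻ˡ gₙ₋ₗ(z)]`.
By strong induction the last factors converge at `z₀`, so in the limit only the term `l = 1`
survives (and the constant `2` when `n = 1`): the limits satisfy `L₁ = 2 θ₀⁻²` and
`Lₙ₊₁ = θ₀⁻² θ₁ Lₙ`.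
-/

open Filter Topology

theorem analyticOn_of_eq_mul_add_sum {S : Set ℂ} {F : ℂ → ℂ} {c : ℂ} {k : ℕ} {θ : ℕ → ℂ}
    {g : ℤ → ℂ → ℂ} (hF : AnalyticOn ℂ F S) (hzero : ∀ n : ℤ, n ≤ 0 → g n = 0)
    (hrec : ∀ n : ℤ, 1 ≤ n → ∀ z ∈ S,
      g n z = F z * (c + ∑ l ∈ Finset.Icc 1 k, θ l * g (n - l) z))
    (n : ℤ) : AnalyticOn ℂ (g n) S := by
  suffices h : ∀ m : ℕ, ∀ n : ℤ, n ≤ m → AnalyticOn ℂ (g n) S from h n.toNat n n.self_le_toNat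
  intro m
  induction m with
  | zero => intro n hn; rw [hzero n hn]; exact analyticOn_const
  | succ m ih =>
    intro n hn
    rcases le_or_gt n 0 with hn0 | hn0
    · rw [hzero n hn0]; exact analyticOn_const
    refine AnalyticOn.congr ?_ (hrec n hn0)
    refine hF.mul (analyticOn_const.add (Finset.analyticOn_fun_sum _ fun l hl => ?_))
    have hl := (Finset.mem_Icc.mp hl).1
    exact analyticOn_const.mul (ih _ (by push_cast at hn; omega))

theorem analyticOn_div_one_sub_mul (a : ℂ) :
    AnalyticOn ℂ (fun z => z / (1 - a * z)) {z | z ≠ a⁻¹} := by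
  refine analyticOn_id.div (analyticOn_const.sub (analyticOn_const.mul analyticOn_id)) ?_
  intro z hz h
  exact hz (eq_inv_of_mul_eq_one_right (sub_eq_zero.mp h).symm)

theorem inv_sub_pow_succ_mul_div_one_sub_mul {a z : ℂ} (ha : a ≠ 0) (hz : z ≠ a⁻¹) (w : ℂ)
    (n : ℕ) : (a⁻¹ - z) ^ (n + 1) * (z / (1 - a * z) * w) = z / a * ((a⁻¹ - z) ^ n * w) := by
  have hfac : 1 - a * z = a * (a⁻¹ - z) := by rw [mul_sub, mul_inv_cancel₀ ha]
  have hz' : a⁻¹ - z ≠ 0 := sub_ne_zero.mpr hz.symm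
  rw [hfac]
  generalize a⁻¹ - z = u at hz' ⊢
  field_simp
  ring

theorem tendsto_sub_pow_nhdsNE (z₀ : ℂ) (n : ℕ) :
    Tendsto (fun z => (z₀ - z) ^ n) (𝓝[≠] z₀) (𝓝 (0 ^ n)) := by
  have h : Tendsto (fun z => (z₀ - z) ^ n) (𝓝 z₀) (𝓝 ((z₀ - z₀) ^ n)) :=
    ((continuous_const.sub continuous_id).pow n).tendsto z₀
  simpa using h.mono_left nhdsWithin_le_nhds

theorem tendsto_sub_pow_mul_of_le {f : ℂ → ℂ} {z₀ L : ℂ} {j n : ℕ} (hjn : j ≤ n)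
    (h : Tendsto (fun z => (z₀ - z) ^ j * f z) (𝓝[≠] z₀) (𝓝 L)) :
    Tendsto (fun z => (z₀ - z) ^ n * f z) (𝓝[≠] z₀) (𝓝 (0 ^ (n - j) * L)) := by
  refine ((tendsto_sub_pow_nhdsNE z₀ (n - j)).mul h).congr fun z => ?_
  rw [← mul_assoc, ← pow_add, Nat.sub_add_cancel hjn]

/-- The leading Laurent coefficient of `gₙ` at `a⁻¹`; its value `0` at `n = 0` matches `g₀ = 0`. -/
noncomputable def poleCoeff (a c θ₁ : ℂ) (n : ℕ) : ℂ :=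
  if n = 0 then 0 else c * θ₁ ^ (n - 1) * a ^ (-(2 : ℤ) * n)

theorem poleCoeff_succ {a : ℂ} (ha : a ≠ 0) (c θ₁ : ℂ) (n : ℕ) :
    poleCoeff a c θ₁ (n + 1) = a⁻¹ / a * (c * 0 ^ n + θ₁ * poleCoeff a c θ₁ n) := by
  have hinv : a⁻¹ / a = a ^ (-2 : ℤ) := by
    rw [div_eq_mul_inv, zpow_neg, zpow_two, mul_inv]
  rw [hinv]
  rcases n with _ | n
  · simp [poleCoeff, mul_comm]
  · simp only [poleCoeff, Nat.add_one_ne_zero, if_false, Nat.add_sub_cancel, pow_succ',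
      zero_mul, mul_zero, zero_add]
    rw [show -(2 : ℤ) * ↑(n + 1 + 1) = -2 + -2 * ↑(n + 1) by push_cast; ring, zpow_add₀ ha]
    ring

theorem tendsto_inv_sub_pow_mul_of_recurrence {a c : ℂ} {k : ℕ} {θ : ℕ → ℂ} {g : ℤ → ℂ → ℂ}
    (ha : a ≠ 0) (hk : 1 ≤ k)
    (hzero : ∀ n : ℤ, n ≤ 0 → g n = 0)
    (hrec : ∀ n : ℤ, 1 ≤ n → ∀ z : ℂ, z ≠ a⁻¹ →
      g n z = z / (1 - a * z) * (c + ∑ l ∈ Finset.Icc 1 k, θ l * g (n - l) z))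
    (n : ℕ) :
    Tendsto (fun z => (a⁻¹ - z) ^ n * g n z) (𝓝[≠] a⁻¹) (𝓝 (poleCoeff a c (θ 1) n)) := by
  induction n using Nat.strong_induction_on with
  | _ n ih =>
  rcases n with _ | n
  · simp [hzero 0 le_rfl, poleCoeff]
  have hterm : ∀ l ∈ Finset.Icc 1 k, Tendsto (fun z => (a⁻¹ - z) ^ n * g ((n + 1 : ℕ) - l) z)
      (𝓝[≠] a⁻¹) (𝓝 (0 ^ (l - 1) * poleCoeff a c (θ 1) (n + 1 - l))) := by
    intro l hl
    have hl1 := (Finset.mem_Icc.mp hl).1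
    rcases le_or_gt l (n + 1) with hln | hln
    · have hcast : ((n + 1 : ℕ) : ℤ) - l = ((n + 1 - l : ℕ) : ℤ) := by push_cast [hln]; ring
      rw [hcast, show l - 1 = n - (n + 1 - l) by omega]
      exact tendsto_sub_pow_mul_of_le (by omega) (ih _ (by omega))
    · rw [hzero _ (by push_cast; omega), show n + 1 - l = 0 by omega]
      simp [poleCoeff]
  have hlim : Tendsto (fun z => z / a * (c * (a⁻¹ - z) ^ n
        + ∑ l ∈ Finset.Icc 1 k, θ l * ((a⁻¹ - z) ^ n * g ((n + 1 : ℕ) - l) z)))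
      (𝓝[≠] a⁻¹) (𝓝 (poleCoeff a c (θ 1) (n + 1))) := by
    have hsum : ∑ l ∈ Finset.Icc 1 k, θ l * (0 ^ (l - 1) * poleCoeff a c (θ 1) (n + 1 - l))
        = θ 1 * poleCoeff a c (θ 1) n := by
      rw [Finset.sum_eq_single_of_mem 1 (Finset.mem_Icc.mpr ⟨le_rfl, hk⟩)]
      · simp
      · intro l hl hl1
        rw [zero_pow (by have := (Finset.mem_Icc.mp hl).1; omega)]
        simp
    rw [poleCoeff_succ ha, ← hsum]
    exact (((continuous_id.div_const a).tendsto _).mono_left nhdsWithin_le_nhds).mul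
      (((tendsto_sub_pow_nhdsNE _ n).const_mul c).add
        (tendsto_finsetSum _ fun l hl => (hterm l hl).const_mul (θ l)))
  refine hlim.congr' (eventually_nhdsWithin_of_forall fun z (hz : z ≠ a⁻¹) => Eq.symm ?_)
  show (a⁻¹ - z) ^ (n + 1) * g (n + 1 : ℕ) z = _
  rw [hrec (n + 1 : ℕ) (by omega) z hz, inv_sub_pow_succ_mul_div_one_sub_mul ha hz, mul_add,
    Finset.mul_sum, mul_comm _ c]
  simp only [mul_left_comm ((a⁻¹ - z) ^ n)]

theorem simplex_generating_function_singularity_general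
    (k : ℕ) (hk : 1 ≤ k)
    (θ₀ : ℝ) (hθ₀ : θ₀ ∈ Set.Ioo (0 : ℝ) 1)
    (θ : ℕ → ℝ)
    (g : ℤ → ℂ → ℂ)
    (hzero : ∀ n : ℤ, n ≤ 0 → g n = 0)
    (hrec : ∀ n : ℤ, 1 ≤ n → ∀ z : ℂ, z ≠ (θ₀ : ℂ)⁻¹ →
      g n z = z / (1 - (θ₀ : ℂ) * z) * (2 + ∑ l ∈ Finset.Icc 1 k, (θ l : ℂ) * g (n - (l : ℤ)) z)) :
    ∀ n : ℕ, 1 ≤ n →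
      AnalyticOn ℂ (g (n : ℤ)) {z : ℂ | z ≠ (θ₀ : ℂ)⁻¹} ∧
      Tendsto (fun z : ℂ => ((θ₀ : ℂ)⁻¹ - z) ^ n * g (n : ℤ) z)
        (nhdsWithin ((θ₀ : ℂ)⁻¹) {z : ℂ | z ≠ (θ₀ : ℂ)⁻¹})
        (nhds ((2 * θ 1 ^ (n - 1) * θ₀ ^ (-(2 : ℤ) * n) : ℝ) : ℂ)) := by
  intro n hn
  have hθ₀' : (θ₀ : ℂ) ≠ 0 := Complex.ofReal_ne_zero.mpr hθ₀.1.ne'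
  refine ⟨analyticOn_of_eq_mul_add_sum (analyticOn_div_one_sub_mul _) hzero hrec n, ?_⟩
  have hcoeff : poleCoeff θ₀ 2 (θ 1) n = ((2 * θ 1 ^ (n - 1) * θ₀ ^ (-(2 : ℤ) * n) : ℝ) : ℂ) := by
    simp only [poleCoeff, Nat.one_le_iff_ne_zero.mp hn, if_false]
    push_cast
    rfl
  rw [← hcoeff]
  exact tendsto_inv_sub_pow_mul_of_recurrence hθ₀' hk hzero hrec n

/-- For the generating functions `g_n` of `k`-point simplex learning, satisfying
`g_n(z) = (z/(1 − θ₀ z))·[2 + ∑_{l=1}^k θ_l g_{n−l}(z)]` with `g_n = 0` for `n ≤ 0`,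
each `g_n` (for `n ≥ 1`) is analytic away from `z₀ = 1/θ₀`, where it has a pole of
order exactly `n`: `lim_{z→z₀} (z₀ − z)^n g_n(z) = 2·θ₁^{n−1}·θ₀^{−2n}`. -/
theorem simplex_generating_function_singularity
    (k : ℕ) (hk : 1 ≤ k)
    (θ₀ : ℝ) (hθ₀ : θ₀ ∈ Set.Ioo (0 : ℝ) 1)
    (θ : ℕ → ℝ) (hθ : ∀ l, 1 ≤ l → l ≤ k → 0 ≤ θ l) (hθ₁ : 0 < θ 1)
    (g : ℤ → ℂ → ℂ)
    (hzero : ∀ n : ℤ, n ≤ 0 → g n = 0)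
    (hrec : ∀ n : ℤ, 1 ≤ n → ∀ z : ℂ, z ≠ (θ₀ : ℂ)⁻¹ →
      g n z = z / (1 - (θ₀ : ℂ) * z) * (2 + ∑ l ∈ Finset.Icc 1 k, (θ l : ℂ) * g (n - (l : ℤ)) z)) :
    ∀ n : ℕ, 1 ≤ n →
      AnalyticOn ℂ (g (n : ℤ)) {z : ℂ | z ≠ (θ₀ : ℂ)⁻¹} ∧
      Tendsto (fun z : ℂ => ((θ₀ : ℂ)⁻¹ - z) ^ n * g (n : ℤ) z)
        (nhdsWithin ((θ₀ : ℂ)⁻¹) {z : ℂ | z ≠ (θ₀ : ℂ)⁻¹})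
        (nhds ((2 * θ 1 ^ (n - 1) * θ₀ ^ (-(2 : ℤ) * n) : ℝ) : ℂ)) :=
  simplex_generating_function_singularity_general k hk θ₀ hθ₀ θ g hzero hrec
end

section
/- Define H(α; n) = log[2·Γ(αn + n)/(Γ(n)·Γ(αn + 1))] + (n−1)·log θ₁ + (α−1)·n·log θ₀, for constants θ₀ ∈ (0,1), θ₁ ∈ (0,1]. Let A(α) = (α+1)log(α+1) − α·log α + (α−1)log θ₀ + log θ₁. Then for each α > 0, H(α; n)/n → A(α) as n → ∞; in particular, if A(α) < 0 then H(α; n) → −∞, and if A(α) > 0 then H(α; n) → +∞. -/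
/-!
Stirling's formula gives `log Γ(x) = x log x - x + o(x)`: for integers it is the factorial
version, and for real `x ≥ 2` the monotonicity of `Γ` squeezes `Γ(x)` between `Γ(⌊x⌋)` and
`⌊x⌋!`. In `H(α; n)` the leading terms of the three Gamma factors combine exactly,
`S((α+1)n) - S(n) - S(αn) = n((α+1) log(α+1) - α log α)` with `S(x) = x log x - x`, so
`H(α; n) = n A(α) + o(n)`.
-/

open Filter Real Asymptotics Stirling
open scoped Nat

lemma mul_log_sub_sub_le {u v : ℝ} (hu : 0 < u) (hv : 0 < v) :
    (v * log v - v) - (u * log u - u) ≤ (v - u) * log v := by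
  have h := mul_le_mul_of_nonneg_left (log_le_sub_one_of_pos (div_pos hv hu)) hu.le
  rw [log_div hv.ne' hu.ne', mul_sub, mul_sub, mul_div_cancel₀ _ hu.ne'] at h
  linarith

lemma Asymptotics.IsLittleO.comp_const_mul_natCast {f : ℝ → ℝ} (hf : f =o[atTop] id) {c : ℝ}
    (hc : 0 < c) : (fun n : ℕ => f (c * n)) =o[atTop] (fun n : ℕ => (n : ℝ)) :=
  (hf.comp_tendsto (tendsto_natCast_atTop_atTop.const_mul_atTop hc)).trans_isBigO
    (isBigO_const_mul_self c _ _)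

lemma isLittleO_log_factorial_sub :
    (fun k : ℕ => log (k ! : ℝ) - (k * log k - k)) =o[atTop] (fun k : ℕ => (k : ℝ)) := by
  have hseq : (fun k : ℕ => log (stirlingSeq k)) =o[atTop] (fun k : ℕ => (k : ℝ)) :=
    ((tendsto_stirlingSeq_sqrt_pi.log (by positivity)).isBigO_one ℝ).trans_isLittleO
      ((isLittleO_one_left_iff ℝ).2 (by simpa using tendsto_natCast_atTop_atTop))
  have hlog := isLittleO_log_id_atTop.comp_const_mul_natCast two_pos
  refine (hseq.add (hlog.const_mul_left (1 / 2))).congr' ?_ EventuallyEq.rfl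
  filter_upwards [eventually_ne_atTop 0] with k hk
  rw [log_stirlingSeq_formula, log_div (by positivity) (exp_pos 1).ne', log_exp]
  ring

noncomputable def logGammaRemainder (x : ℝ) : ℝ := log (Gamma x) - (x * log x - x)

lemma abs_logGammaRemainder_le {x : ℝ} (hx : 2 ≤ x) :
    |logGammaRemainder x| ≤ |log (⌊x⌋₊ ! : ℝ) - (⌊x⌋₊ * log ⌊x⌋₊ - ⌊x⌋₊)| + 2 * log x := by
  set k := ⌊x⌋₊
  have hk : (2 : ℝ) ≤ k := by exact_mod_cast Nat.le_floor (by exact_mod_cast hx)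
  have hkx : (k : ℝ) ≤ x := Nat.floor_le (by linarith)
  have hxk : x < k + 1 := Nat.lt_floor_add_one x
  have hΓ : Gamma (k + 1) = k ! := Gamma_nat_eq_factorial k
  have hmono := Gamma_strictMonoOn_Ici.monotoneOn
  have hlower : log (k ! : ℝ) - log k ≤ log (Gamma x) := by
    rw [← hΓ, Gamma_add_one (by positivity), log_mul (by positivity)
      (Gamma_pos_of_pos (by positivity)).ne', add_sub_cancel_left]
    exact log_le_log (Gamma_pos_of_pos (by positivity)) (hmono hk (by simpa using hx) hkx)
  have hupper : log (Gamma x) ≤ log (k ! : ℝ) := by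
    rw [← hΓ]
    exact log_le_log (Gamma_pos_of_pos (by positivity))
      (hmono (by simpa using hx) (by simp only [Set.mem_Ici]; linarith) hxk.le)
  have hS₁ := mul_log_sub_sub_le (by positivity : (0 : ℝ) < k) (by positivity : 0 < x)
  have hS₂ := mul_log_sub_sub_le (by positivity : 0 < x) (by positivity : (0 : ℝ) < k)
  have hlogk : 0 ≤ log (k : ℝ) := log_nonneg (by linarith)
  have hlogkx : log (k : ℝ) ≤ log x := log_le_log (by positivity) hkx
  have hgap : (x - k) * log x ≤ log x := mul_le_of_le_one_left (by linarith) (by linarith)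
  unfold logGammaRemainder
  rw [abs_le]
  constructor <;> nlinarith [neg_abs_le (log (k ! : ℝ) - (k * log k - k)),
    le_abs_self (log (k ! : ℝ) - (k * log k - k))]

theorem isLittleO_logGammaRemainder : logGammaRemainder =o[atTop] id := by
  have hfloor : (fun x : ℝ => (⌊x⌋₊ : ℝ)) =O[atTop] id := by
    refine IsBigO.of_bound 1 ?_
    filter_upwards [eventually_ge_atTop 0] with x hx
    simpa [abs_of_nonneg hx] using Nat.floor_le hx
  have hbound : (fun x : ℝ => |log (⌊x⌋₊ ! : ℝ) - (⌊x⌋₊ * log ⌊x⌋₊ - ⌊x⌋₊)| + 2 * log x)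
      =o[atTop] id :=
    (isLittleO_abs_left.2 ((isLittleO_log_factorial_sub.comp_tendsto
      tendsto_nat_floor_atTop).trans_isBigO hfloor)).add
      (isLittleO_log_id_atTop.const_mul_left 2)
  refine IsBigO.trans_isLittleO (IsBigO.of_bound 1 ?_) hbound
  filter_upwards [eventually_ge_atTop 2] with x hx
  have hlog : 0 ≤ log x := log_nonneg (by linarith)
  rw [one_mul, norm_eq_abs, norm_eq_abs, abs_of_nonneg (a := _ + 2 * log x) (by positivity)]
  exact abs_logGammaRemainder_le hx

lemma log_two_mul_Gamma_div_Gamma_mul_Gamma {α x : ℝ} (hα : 0 < α) (hx : 0 < x) :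
    log (2 * Gamma (α * x + x) / (Gamma x * Gamma (α * x + 1))) =
      x * ((α + 1) * log (α + 1) - α * log α) + log 2 - log (α * x)
        + logGammaRemainder ((α + 1) * x) - logGammaRemainder x
        - logGammaRemainder (α * x) := by
  have hΓx := (Gamma_pos_of_pos hx).ne'
  have hΓαx := (Gamma_pos_of_pos (by positivity : 0 < α * x)).ne'
  have hΓ := (Gamma_pos_of_pos (by positivity : 0 < (α + 1) * x)).ne'
  rw [Gamma_add_one (by positivity), show α * x + x = (α + 1) * x by ring]
  unfold logGammaRemainder
  rw [log_div (by positivity) (by positivity), log_mul two_ne_zero hΓ,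
    log_mul hΓx (by positivity), log_mul (by positivity) hΓαx,
    log_mul (x := α + 1) (by positivity) hx.ne', log_mul hα.ne' hx.ne']
  ring

lemma tendsto_atTop_of_tendsto_div_natCast {u : ℕ → ℝ} {A : ℝ} (hA : 0 < A)
    (hu : Tendsto (fun n => u n / n) atTop (nhds A)) : Tendsto u atTop atTop := by
  refine (hu.pos_mul_atTop hA tendsto_natCast_atTop_atTop).congr' ?_
  filter_upwards [eventually_ne_atTop 0] with n hn
  exact div_mul_cancel₀ _ (Nat.cast_ne_zero.2 hn)

theorem vc_entropy_asymptotics_general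
    (θ₀ θ₁ : ℝ)
    (α : ℝ) (hα : 0 < α) :
    let H : ℕ → ℝ := fun n =>
      Real.log (2 * Real.Gamma (α * n + n) / (Real.Gamma n * Real.Gamma (α * n + 1)))
        + ((n : ℝ) - 1) * Real.log θ₁ + (α - 1) * n * Real.log θ₀
    let A : ℝ := (α + 1) * Real.log (α + 1) - α * Real.log α
        + (α - 1) * Real.log θ₀ + Real.log θ₁
    Tendsto (fun n : ℕ => H n / n) atTop (nhds A) ∧
    (A < 0 → Tendsto H atTop atBot) ∧
    (0 < A → Tendsto H atTop atTop) := by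
  intro H A
  have hE {c : ℝ} (hc : 0 < c) := isLittleO_logGammaRemainder.comp_const_mul_natCast hc
  have hconst : (fun _ : ℕ => log 2 - log θ₁) =o[atTop] (fun n : ℕ => (n : ℝ)) :=
    isLittleO_const_left.2 (Or.inr (tendsto_norm_atTop_atTop.comp tendsto_natCast_atTop_atTop))
  have hrem : (fun n : ℕ => H n - n * A) =o[atTop] (fun n : ℕ => (n : ℝ)) := by
    refine ((((hE (by linarith : 0 < α + 1)).sub (hE one_pos)).sub (hE hα)).sub
      (isLittleO_log_id_atTop.comp_const_mul_natCast hα) |>.add hconst).congr' ?_ EventuallyEq.rfl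
    filter_upwards [eventually_ne_atTop 0] with n hn
    have hpos : (0 : ℝ) < n := Nat.cast_pos.2 (Nat.pos_of_ne_zero hn)
    simp only [H, A, log_two_mul_Gamma_div_Gamma_mul_Gamma hα hpos, one_mul]
    ring
  have hlim : Tendsto (fun n : ℕ => H n / n) atTop (nhds A) := by
    refine (hrem.tendsto_div_nhds_zero.add_const A).congr' ?_ |>.mono_right (by rw [zero_add])
    filter_upwards [eventually_ne_atTop 0] with n hn
    field_simp
    ring
  refine ⟨hlim, fun hA => ?_, fun hA => tendsto_atTop_of_tendsto_div_natCast hA hlim⟩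
  have hneg := tendsto_atTop_of_tendsto_div_natCast (u := -H) (neg_pos.2 hA)
    (by simpa [neg_div] using hlim.neg)
  simpa using tendsto_neg_atTop_iff.1 hneg

/-- The asymptotic VC entropy of `k`-point simplex learning,
`H(α;n) = log[2·Γ(αn+n)/(Γ(n)·Γ(αn+1))] + (n−1)·log θ₁ + (α−1)·n·log θ₀`,
satisfies `H(α;n)/n → A(α)` as `n → ∞`, where
`A(α) = (α+1)log(α+1) − α·log α + (α−1)log θ₀ + log θ₁`; in particular
`H(α;n) → −∞` if `A(α) < 0` and `H(α;n) → +∞` if `A(α) > 0`. -/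
theorem vc_entropy_asymptotics
    (θ₀ θ₁ : ℝ) (hθ₀ : θ₀ ∈ Set.Ioo (0 : ℝ) 1) (hθ₁ : θ₁ ∈ Set.Ioc (0 : ℝ) 1)
    (α : ℝ) (hα : 0 < α) :
    let H : ℕ → ℝ := fun n =>
      Real.log (2 * Real.Gamma (α * n + n) / (Real.Gamma n * Real.Gamma (α * n + 1)))
        + ((n : ℝ) - 1) * Real.log θ₁ + (α - 1) * n * Real.log θ₀
    let A : ℝ := (α + 1) * Real.log (α + 1) - α * Real.log α
        + (α - 1) * Real.log θ₀ + Real.log θ₁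
    Tendsto (fun n : ℕ => H n / n) atTop (nhds A) ∧
    (A < 0 → Tendsto H atTop atBot) ∧
    (0 < A → Tendsto H atTop atTop) :=
  vc_entropy_asymptotics_general θ₀ θ₁ α hα
end
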